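/- Let A be a symmetric 2×2 complex matrix, let μ ≥ 0 and λ ≥ 0 be real numbers, and let C A = 2μ A + λ tr(A) I₂. Then ‖C A‖_F² ≤ (4μ + 2λ) Re⟨C A, A⟩, where ⟨X, Y⟩ = tr(X (conj Y)ᵀ) and ‖X‖_F² = ⟨X, X⟩. (The complex-valued version of Lemma 3.3, as applied to the modified stress tensor C(∇_k ⊙ u) of complex-valued Bloch modes in the coercivity proof of Theorem 3.4.) -/

import Mathlib

/-! With `t = tr A`, `‖A‖² = Re tr(A Aᴴ)` and `C A = 2μ A + λ t I` on `n × n` matrices,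
expanding gives `‖C A‖² = 4μ² ‖A‖² + (4μλ + nλ²) |t|²` and `Re⟨C A, A⟩ = 2μ ‖A‖² + λ |t|²`.
The `|t|²` terms cancel in `(4μ + nλ) Re⟨C A, A⟩ - ‖C A‖² = (4μ² + 2nμλ) ‖A‖² ≥ 0`. -/

open Matrix

section

variable {n 𝕜 : Type*} [Fintype n] [RCLike 𝕜]

open scoped ComplexOrder in
lemma Matrix.re_trace_mul_conjTranspose_self_nonneg {m : Type*} [Fintype m] (A : Matrix n m 𝕜) :
    0 ≤ RCLike.re (A * Aᴴ).trace :=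
  (RCLike.nonneg_iff.mp (posSemidef_self_mul_conjTranspose A).trace_nonneg).1

variable [DecidableEq n]

def isotropicStiffness (μ lam : ℝ) (A : Matrix n n 𝕜) : Matrix n n 𝕜 :=
  ((2 * μ : ℝ) : 𝕜) • A + ((lam : 𝕜) * A.trace) • 1

lemma Matrix.trace_smul_add_smul_one_mul_conjTranspose (A : Matrix n n 𝕜) (a b c d : 𝕜) :
    ((a • A + b • 1) * (c • A + d • 1)ᴴ).trace =
      a * star c * (A * Aᴴ).trace + a * star d * A.trace + b * star c * star A.trace
        + b * star d * Fintype.card n := by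
  simp only [conjTranspose_add, conjTranspose_smul, conjTranspose_one, add_mul, mul_add,
    smul_mul, Matrix.mul_smul, Matrix.one_mul, Matrix.mul_one, trace_add, trace_smul, trace_one,
    trace_conjTranspose, smul_eq_mul]
  ring

lemma re_trace_isotropicStiffness_mul_conjTranspose (μ lam : ℝ) (A : Matrix n n 𝕜) :
    RCLike.re (isotropicStiffness μ lam A * Aᴴ).trace =
      2 * μ * RCLike.re (A * Aᴴ).trace + lam * ‖A.trace‖ ^ 2 := by
  have h := trace_smul_add_smul_one_mul_conjTranspose A ((2 * μ : ℝ) : 𝕜) (lam * A.trace) 1 0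
  rw [one_smul, zero_smul, add_zero] at h
  rw [isotropicStiffness, h]
  simp only [map_mul, star_one, mul_one, star_zero, mul_zero, zero_mul, add_zero, RCLike.star_def,
    map_add, RCLike.mul_re, RCLike.ofReal_re, RCLike.ofReal_im, sub_zero, RCLike.mul_im,
    RCLike.conj_re, RCLike.conj_im, mul_neg, sub_neg_eq_add, RCLike.norm_sq_eq_def]
  ring

lemma re_trace_isotropicStiffness_mul_conjTranspose_self (μ lam : ℝ) (A : Matrix n n 𝕜) :
    RCLike.re (isotropicStiffness μ lam A * (isotropicStiffness μ lam A)ᴴ).trace =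
      4 * μ ^ 2 * RCLike.re (A * Aᴴ).trace
        + (4 * μ * lam + Fintype.card n * lam ^ 2) * ‖A.trace‖ ^ 2 := by
  rw [isotropicStiffness, trace_smul_add_smul_one_mul_conjTranspose]
  simp only [map_mul, star_mul', RCLike.star_def, RCLike.conj_ofReal, map_add, RCLike.mul_re,
    RCLike.ofReal_re, RCLike.ofReal_im, mul_zero, sub_zero, RCLike.mul_im, zero_mul, add_zero,
    RCLike.conj_re, RCLike.conj_im, mul_neg, neg_zero, neg_mul, sub_neg_eq_add, zero_add,
    RCLike.natCast_re, RCLike.natCast_im, RCLike.norm_sq_eq_def]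
  ring

lemma re_trace_isotropicStiffness_mul_conjTranspose_self_le {μ lam : ℝ} (hμ : 0 ≤ μ)
    (hlam : 0 ≤ lam) (A : Matrix n n 𝕜) :
    RCLike.re (isotropicStiffness μ lam A * (isotropicStiffness μ lam A)ᴴ).trace ≤
      (4 * μ + Fintype.card n * lam) * RCLike.re (isotropicStiffness μ lam A * Aᴴ).trace := by
  rw [re_trace_isotropicStiffness_mul_conjTranspose_self,
    re_trace_isotropicStiffness_mul_conjTranspose]
  have hA := re_trace_mul_conjTranspose_self_nonneg A
  have hgap : 0 ≤ (4 * μ ^ 2 + 2 * Fintype.card n * μ * lam) * RCLike.re (A * Aᴴ).trace := by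
    positivity
  linarith

end

theorem stiffness_tensor_hermitian_frobenius_bound_general
    (A : Matrix (Fin 2) (Fin 2) ℂ)
    (μ lam : ℝ) (hμ : 0 ≤ μ) (hlam : 0 ≤ lam)
    (CA : Matrix (Fin 2) (Fin 2) ℂ)
    (hCA : CA = ((2 * μ : ℝ) : ℂ) • A + ((lam : ℂ) * A.trace) • (1 : Matrix (Fin 2) (Fin 2) ℂ)) :
    ((CA * CAᴴ).trace).re ≤ (4 * μ + 2 * lam) * ((CA * Aᴴ).trace).re := by
  have h := re_trace_isotropicStiffness_mul_conjTranspose_self_le hμ hlam A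
  rw [show CA = isotropicStiffness μ lam A from hCA]
  simpa only [RCLike.re_to_complex, Fintype.card_fin, Nat.cast_ofNat] using h

/-- Complex version of Lemma 3.3: for a symmetric 2×2 complex matrix `A` and
real `μ, lam ≥ 0`, with `CA = 2μ A + lam tr(A) I₂`, one has
`‖CA‖_F² ≤ (4μ + 2lam) Re⟨CA, A⟩`, where `⟨X, Y⟩ = tr(X Yᴴ)` and `‖X‖_F² = ⟨X, X⟩`. -/
theorem stiffness_tensor_hermitian_frobenius_bound
    (A : Matrix (Fin 2) (Fin 2) ℂ) (hA : A.IsSymm)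
    (μ lam : ℝ) (hμ : 0 ≤ μ) (hlam : 0 ≤ lam)
    (CA : Matrix (Fin 2) (Fin 2) ℂ)
    (hCA : CA = ((2 * μ : ℝ) : ℂ) • A + ((lam : ℂ) * A.trace) • (1 : Matrix (Fin 2) (Fin 2) ℂ)) :
    ((CA * CAᴴ).trace).re ≤ (4 * μ + 2 * lam) * ((CA * Aᴴ).trace).re :=
  stiffness_tensor_hermitian_frobenius_bound_general A μ lam hμ hlam CA hCA
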